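/- Fix n, u, c, m : ℕ and e := u + c. Let N a : Matrix (Fin e) (Fin u) ℝ and C a : Matrix (Fin c) (Fin e) ℝ, for a ∈ Fin (n+1), be constant matrices satisfying (C a) * (N b) + (C b) * (N a) = 0 for all a, b, and let h : Matrix (Fin u) (Fin e) ℝ, hΓ : Matrix (Fin e) (Fin c) ℝ satisfy h * (N 0) = 1, (N 0) * h + hΓ * (C 0) = 1, and (C 0) * hΓ = 1. Let M a : Matrix (Fin m) (Fin c) ℝ satisfy M 0 = 0 and (M a) * (C 0) * (N b) + (M b) * (C 0) * (N a) = 0 for all a, b, and let NΔ : Matrix (Fin c) (Fin m) ℝ be arbitrary. Let φ : (Fin (n+1) → ℝ) → (Fin u → ℝ) be twice continuously differentiable, define E x := ∑ b, (N b).mulVec (∂_b φ x) and ψ x := (C 0).mulVec (E x), and assume φ is a solution of the evolution equations, i.e. h.mulVec (E x) = 0 for every x. Then the constraints satisfy the on-shell subsidiary system: for every x, ∂_0 ψ x + ∑ i ∈ Finset.univ \ {0}, ((C i) * hΓ + NΔ * (M i)).mulVec (∂_i ψ x) = 0. -/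

import Mathlib

/-!
Differentiating the on-shell condition `h E = 0` gives `h ∂_a E = 0`, so `N₀ h + hΓ C₀ = 1`
yields `hΓ ∂_a ψ = ∂_a E`, and the subsidiary system becomes
`∑_a (C_a + NΔ M_a C₀) ∂_a E = 0` (the `a = 0` term of the `M`-part vanishes as `M₀ = 0`).
Since `∂_a E = ∑_b N_b ∂_a ∂_b φ`, both sums contract a family that is antisymmetric in `(a, b)`
by the Geroch conditions against the symmetric Hessian of `φ`, hence vanish.
-/

open Matrix

section Calculus

variable {𝕜 X : Type*} [NontriviallyNormedField 𝕜] [CompleteSpace 𝕜]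
  [NormedAddCommGroup X] [NormedSpace 𝕜 X] {k l : Type*} [Fintype k] [Fintype l] {x : X}

theorem hasFDerivAt_matrix_mulVec (A : Matrix k l 𝕜) {f : X → l → 𝕜} {f' : X →L[𝕜] l → 𝕜}
    (hf : HasFDerivAt f f' x) :
    HasFDerivAt (fun y => A *ᵥ f y) (A.mulVecLin.toContinuousLinearMap.comp f') x :=
  A.mulVecLin.toContinuousLinearMap.hasFDerivAt.comp x hf

theorem DifferentiableAt.matrix_mulVec (A : Matrix k l 𝕜) {f : X → l → 𝕜}
    (hf : DifferentiableAt 𝕜 f x) : DifferentiableAt 𝕜 (fun y => A *ᵥ f y) x :=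
  (hasFDerivAt_matrix_mulVec A hf.hasFDerivAt).differentiableAt

theorem fderiv_matrix_mulVec_apply (A : Matrix k l 𝕜) {f : X → l → 𝕜}
    (hf : DifferentiableAt 𝕜 f x) (v : X) :
    fderiv 𝕜 (fun y => A *ᵥ f y) x v = A *ᵥ fderiv 𝕜 f x v := by
  rw [(hasFDerivAt_matrix_mulVec A hf.hasFDerivAt).fderiv]
  rfl

variable {ι : Type*} [Fintype ι] {φ : X → l → 𝕜}

theorem differentiableAt_sum_mulVec_fderiv (hφ : DifferentiableAt 𝕜 (fderiv 𝕜 φ) x)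
    (N : ι → Matrix k l 𝕜) (w : ι → X) :
    DifferentiableAt 𝕜 (fun y => ∑ b, N b *ᵥ fderiv 𝕜 φ y (w b)) x :=
  .fun_sum fun b _ => (hφ.clm_apply (differentiableAt_const (w b))).matrix_mulVec (N b)

theorem fderiv_sum_mulVec_fderiv_apply (hφ : DifferentiableAt 𝕜 (fderiv 𝕜 φ) x)
    (N : ι → Matrix k l 𝕜) (w : ι → X) (v : X) :
    fderiv 𝕜 (fun y => ∑ b, N b *ᵥ fderiv 𝕜 φ y (w b)) x v
      = ∑ b, N b *ᵥ fderiv 𝕜 (fderiv 𝕜 φ) x v (w b) := by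
  rw [fderiv_fun_sum fun b _ => (hφ.clm_apply (differentiableAt_const (w b))).matrix_mulVec (N b),
    _root_.sum_apply]
  refine Finset.sum_congr rfl fun b _ => ?_
  rw [fderiv_matrix_mulVec_apply _ (hφ.clm_apply (differentiableAt_const (w b))),
    fderiv_clm_apply hφ (differentiableAt_const (w b))]
  simp

end Calculus

section Algebra

variable {ι : Type*} [Fintype ι]

theorem sum_sum_eq_zero_of_antisymm {V : Type*} [AddCommGroup V] [IsAddTorsionFree V]
    (g : ι → ι → V) (hg : ∀ a b, g a b + g b a = 0) : ∑ a, ∑ b, g a b = 0 := by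
  refine nsmul_right_injective (M := V) two_ne_zero ?_
  calc 2 • ∑ a, ∑ b, g a b = ∑ a, ∑ b, g a b + ∑ a, ∑ b, g b a := by
        rw [two_nsmul, Finset.sum_comm (f := fun a b => g b a)]
    _ = ∑ a, ∑ b, (g a b + g b a) := by simp only [Finset.sum_add_distrib]
    _ = 2 • 0 := by simp [hg]

variable {R : Type*} [CommRing R] [IsAddTorsionFree R] {k l m : Type*} [Fintype l] [Fintype m]

theorem sum_mulVec_sum_mulVec_eq_zero_of_antisymm (C : ι → Matrix k l R) (N : ι → Matrix l m R)
    (hCN : ∀ a b, C a * N b + C b * N a = 0) (D : ι → ι → m → R) (hD : ∀ a b, D a b = D b a) :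
    ∑ a, C a *ᵥ ∑ b, N b *ᵥ D a b = 0 := by
  simp only [mulVec_sum, mulVec_mulVec]
  refine sum_sum_eq_zero_of_antisymm _ fun a b => ?_
  rw [hD b a, ← add_mulVec, hCN, zero_mulVec]

end Algebra

theorem constraint_evolution_of_onShell {R ι u e c k : Type*} [CommRing R] [IsAddTorsionFree R]
    [Fintype ι] [DecidableEq ι] [Fintype u] [Fintype e] [DecidableEq e] [Fintype c] [Fintype k]
    (i₀ : ι) (N : ι → Matrix e u R) (C : ι → Matrix c e R)
    (hGeroch : ∀ a b, C a * N b + C b * N a = 0) (h : Matrix u e R) (hΓ : Matrix e c R)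
    (hinv : N i₀ * h + hΓ * C i₀ = 1) (M : ι → Matrix k c R) (hM0 : M i₀ = 0)
    (hMsym : ∀ a b, M a * C i₀ * N b + M b * C i₀ * N a = 0) (NΔ : Matrix c k R)
    (D : ι → ι → u → R) (hD : ∀ a b, D a b = D b a) (V : ι → e → R)
    (hV : ∀ a, V a = ∑ b, N b *ᵥ D a b) (hon : ∀ a, h *ᵥ V a = 0) :
    C i₀ *ᵥ V i₀ + ∑ i ∈ Finset.univ \ {i₀}, (C i * hΓ + NΔ * M i) *ᵥ (C i₀ *ᵥ V i) = 0 := by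
  have hrec : ∀ a, hΓ *ᵥ (C i₀ *ᵥ V a) = V a := fun a => by
    simpa [add_mulVec, ← mulVec_mulVec, hon a] using congrArg (· *ᵥ V a) hinv
  have hC : ∑ a, C a *ᵥ V a = 0 := by
    simpa only [hV] using sum_mulVec_sum_mulVec_eq_zero_of_antisymm C N hGeroch D hD
  have hM : ∑ a, (M a * C i₀) *ᵥ V a = 0 := by
    simpa only [hV] using
      sum_mulVec_sum_mulVec_eq_zero_of_antisymm (fun a => M a * C i₀) N hMsym D hD
  calc C i₀ *ᵥ V i₀ + ∑ i ∈ Finset.univ \ {i₀}, (C i * hΓ + NΔ * M i) *ᵥ (C i₀ *ᵥ V i)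
      = ∑ a, (C a *ᵥ V a + NΔ *ᵥ ((M a * C i₀) *ᵥ V a)) := by
        rw [Finset.sum_eq_add_sum_sdiff_singleton_of_mem (Finset.mem_univ i₀)]
        simp only [add_mulVec, ← mulVec_mulVec, hrec, hM0]
        simp
    _ = 0 := by rw [Finset.sum_add_distrib, ← mulVec_sum, hC, hM, mulVec_zero, add_zero]

theorem stmt_5_general (n u c m : ℕ)
    (N : Fin (n + 1) → Matrix (Fin (u + c)) (Fin u) ℝ)
    (C : Fin (n + 1) → Matrix (Fin c) (Fin (u + c)) ℝ)
    (hGeroch : ∀ a b, C a * N b + C b * N a = 0)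
    (h : Matrix (Fin u) (Fin (u + c)) ℝ)
    (hΓ : Matrix (Fin (u + c)) (Fin c) ℝ)
    (hinv : N 0 * h + hΓ * C 0 = 1)
    (M : Fin (n + 1) → Matrix (Fin m) (Fin c) ℝ)
    (hM0 : M 0 = 0)
    (hMsym : ∀ a b, M a * C 0 * N b + M b * C 0 * N a = 0)
    (NΔ : Matrix (Fin c) (Fin m) ℝ)
    (φ : (Fin (n + 1) → ℝ) → (Fin u → ℝ))
    (hφ : ContDiff ℝ 2 φ)
    (E : (Fin (n + 1) → ℝ) → (Fin (u + c) → ℝ))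
    (hE : ∀ x, E x = ∑ b, (N b).mulVec (fderiv ℝ φ x (Pi.single b 1)))
    (ψ : (Fin (n + 1) → ℝ) → (Fin c → ℝ))
    (hψ : ∀ x, ψ x = (C 0).mulVec (E x))
    (honshell : ∀ x, h.mulVec (E x) = 0) :
    ∀ x, fderiv ℝ ψ x (Pi.single 0 1)
        + ∑ i ∈ Finset.univ \ {0},
            (C i * hΓ + NΔ * M i).mulVec (fderiv ℝ ψ x (Pi.single i 1)) = 0 := by
  intro x
  have hφ' : DifferentiableAt ℝ (fderiv ℝ φ) x :=
    ((hφ.fderiv_right (by norm_num)).differentiable one_ne_zero).differentiableAt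
  have hEφ : E = fun y => ∑ b, N b *ᵥ fderiv ℝ φ y (Pi.single b 1) := funext hE
  have hE' : DifferentiableAt ℝ E x := hEφ ▸ differentiableAt_sum_mulVec_fderiv hφ' N _
  have hon : ∀ a, h *ᵥ fderiv ℝ E x (Pi.single a 1) = 0 := fun a => by
    rw [← fderiv_matrix_mulVec_apply h hE', funext honshell, fderiv_const_apply,
      _root_.zero_apply]
  rw [funext hψ]
  simp only [fderiv_matrix_mulVec_apply _ hE']
  exact constraint_evolution_of_onShell 0 N C hGeroch h hΓ hinv M hM0 hMsym NΔ
    (fun a b => fderiv ℝ (fderiv ℝ φ) x (Pi.single a 1) (Pi.single b 1))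
    (fun a b => hφ.contDiffAt.isSymmSndFDerivAt (by simp) _ _) _
    (fun a => hEφ ▸ fderiv_sum_mulVec_fderiv_apply hφ' N _ _) hon

/-- Constant-coefficient on-shell subsidiary system: along solutions of the evolution
equations, the constraints obey a first-order evolution equation, for any choice of the
free matrix `NΔ` contracted against the extra Geroch fields `M`. -/
theorem stmt_5 (n u c m : ℕ)
    (N : Fin (n + 1) → Matrix (Fin (u + c)) (Fin u) ℝ)
    (C : Fin (n + 1) → Matrix (Fin c) (Fin (u + c)) ℝ)
    (hGeroch : ∀ a b, C a * N b + C b * N a = 0)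
    (h : Matrix (Fin u) (Fin (u + c)) ℝ)
    (hΓ : Matrix (Fin (u + c)) (Fin c) ℝ)
    (hhN : h * N 0 = 1)
    (hinv : N 0 * h + hΓ * C 0 = 1)
    (hCh : C 0 * hΓ = 1)
    (M : Fin (n + 1) → Matrix (Fin m) (Fin c) ℝ)
    (hM0 : M 0 = 0)
    (hMsym : ∀ a b, M a * C 0 * N b + M b * C 0 * N a = 0)
    (NΔ : Matrix (Fin c) (Fin m) ℝ)
    (φ : (Fin (n + 1) → ℝ) → (Fin u → ℝ))
    (hφ : ContDiff ℝ 2 φ)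
    (E : (Fin (n + 1) → ℝ) → (Fin (u + c) → ℝ))
    (hE : ∀ x, E x = ∑ b, (N b).mulVec (fderiv ℝ φ x (Pi.single b 1)))
    (ψ : (Fin (n + 1) → ℝ) → (Fin c → ℝ))
    (hψ : ∀ x, ψ x = (C 0).mulVec (E x))
    (honshell : ∀ x, h.mulVec (E x) = 0) :
    ∀ x, fderiv ℝ ψ x (Pi.single 0 1)
        + ∑ i ∈ Finset.univ \ {0},
            (C i * hΓ + NΔ * M i).mulVec (fderiv ℝ ψ x (Pi.single i 1)) = 0 :=
  stmt_5_general n u c m N C hGeroch h hΓ hinv M hM0 hMsym NΔ φ hφ E hE ψ hψ honshell
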